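/- arXiv:1501.06394 — 2 statements merged into one kernel-verified Lean document; each statement's English description precedes it below -/
import Mathlib

section
/- Let S be a finite regular semigroup and let J_1, J_2, ..., J_m be the J-classes of S. Then l(S) = l(J_1*) + l(J_2*) + ... + l(J_m*) − 1, where J* denotes the principal factor of a J-class J. -/
/-- The length of a semigroup `M` (stated for any multiplicative structure): the largest
number of non-empty subsemigroups of `M` in a chain, minus 1; equivalently the largest
`k` for which there is a strictly increasing chain of `k + 1` non-empty subsemigroups. -/
noncomputable def semigroupLength (M : Type*) [Mul M] : ℕ :=
  sSup {k : ℕ | ∃ c : Fin (k + 1) → Subsemigroup M,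
    StrictMono c ∧ ∀ i, ((c i : Set M)).Nonempty}

/-- The principal two-sided ideal `S¹ x S¹ = {x} ∪ Sx ∪ xS ∪ SxS` generated by `x`. -/
def principalIdeal {S : Type*} [Semigroup S] (x : S) : Set S :=
  {x} ∪ {y | ∃ a, y = a * x} ∪ {y | ∃ a, y = x * a} ∪ {y | ∃ a b, y = a * x * b}

/-- The `J`-class of `x`: all elements generating the same principal two-sided ideal. -/
def jClass {S : Type*} [Semigroup S] (x : S) : Set S :=
  {y | principalIdeal y = principalIdeal x}

/-- The principal factor `J* = J ∪ {0}` of a subset `J` of a semigroup, with the zero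
represented by `none`. -/
def PrincipalFactor {S : Type*} [Semigroup S] (J : Set S) : Type _ :=
  Option {x : S // x ∈ J}

/-- Multiplication in the principal factor: the product of `x, y ∈ J` is its value in
`S` if that value lies in `J`, and `0` otherwise; `0` is absorbing. -/
noncomputable instance {S : Type*} [Semigroup S] (J : Set S) : Mul (PrincipalFactor J) :=
  ⟨fun a b =>
    match a, b with
    | some x, some y =>
        letI := Classical.dec ((x.1 * y.1) ∈ J)
        if h : (x.1 * y.1) ∈ J then (some ⟨x.1 * y.1, h⟩ : PrincipalFactor J)
        else (none : PrincipalFactor J)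
    | _, _ => (none : PrincipalFactor J)⟩

/-!
For a subset `J` of `S` and a subsemigroup `T`, the trace `{0} ∪ (T ∩ J)` is a subsemigroup of
`J*`. Each strict step of a chain of subsemigroups of `S` strictly enlarges the trace on the
`J`-class of a new element, so summing heights in the lattices of subsemigroups of the `J*` bounds
`l(S) + 1` by `∑ l(J*)`. Conversely, if `J` is a maximal `J`-class of an ideal `I ∪ J`, the
subsemigroups between `I` and `I ∪ J` are the lifts of the subsemigroups of `J*` containing `0`,
and a longest chain of `J*` can be rearranged into one from `{0}` to `J*`; adding the `J`-classes
one at a time from the bottom of the `J`-order gives a chain of length `∑ l(J*)` from `∅` to `S`.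
-/

section PrincipalIdeal

variable {S : Type*} [Semigroup S] {x y z : S}

lemma mem_principalIdeal_iff : z ∈ principalIdeal x ↔
    z = x ∨ (∃ a, z = a * x) ∨ (∃ a, z = x * a) ∨ ∃ a b, z = a * x * b := by
  simp [principalIdeal, or_assoc]

lemma mem_principalIdeal_self (x : S) : x ∈ principalIdeal x :=
  mem_principalIdeal_iff.2 (.inl rfl)

lemma mul_mem_principalIdeal_left (a : S) (h : z ∈ principalIdeal x) :
    a * z ∈ principalIdeal x := by
  rcases mem_principalIdeal_iff.1 h with rfl | ⟨b, rfl⟩ | ⟨b, rfl⟩ | ⟨b, c, rfl⟩ <;>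
    refine mem_principalIdeal_iff.2 ?_
  · exact .inr (.inl ⟨a, rfl⟩)
  · exact .inr (.inl ⟨a * b, (mul_assoc ..).symm⟩)
  · exact .inr (.inr (.inr ⟨a, b, (mul_assoc ..).symm⟩))
  · exact .inr (.inr (.inr ⟨a * b, c, by simp only [mul_assoc]⟩))

lemma mul_mem_principalIdeal_right (a : S) (h : z ∈ principalIdeal x) :
    z * a ∈ principalIdeal x := by
  rcases mem_principalIdeal_iff.1 h with rfl | ⟨b, rfl⟩ | ⟨b, rfl⟩ | ⟨b, c, rfl⟩ <;>
    refine mem_principalIdeal_iff.2 ?_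
  · exact .inr (.inr (.inl ⟨a, rfl⟩))
  · exact .inr (.inr (.inr ⟨b, a, rfl⟩))
  · exact .inr (.inr (.inl ⟨b * a, mul_assoc ..⟩))
  · exact .inr (.inr (.inr ⟨b, c * a, by simp only [mul_assoc]⟩))

lemma principalIdeal_subset_of_mem (h : y ∈ principalIdeal x) :
    principalIdeal y ⊆ principalIdeal x := by
  intro z hz
  rcases mem_principalIdeal_iff.1 hz with rfl | ⟨a, rfl⟩ | ⟨a, rfl⟩ | ⟨a, b, rfl⟩
  · exact h
  · exact mul_mem_principalIdeal_left a h
  · exact mul_mem_principalIdeal_right a h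
  · exact mul_mem_principalIdeal_right b (mul_mem_principalIdeal_left a h)

lemma mem_jClass_self (x : S) : x ∈ jClass x := rfl

lemma jClass_eq_of_mem (h : y ∈ jClass x) : jClass y = jClass x := by
  ext z
  exact ⟨fun hz => hz.trans h, fun hz => hz.trans h.symm⟩

lemma mem_jClass_of_jClass_eq (h : jClass y = jClass x) : y ∈ jClass x :=
  h ▸ mem_jClass_self y

end PrincipalIdeal

lemma Order.height_ne_top_of_finite {α : Type*} [Preorder α] [Finite α] (a : α) :
    Order.height a ≠ ⊤ := by
  have := Fintype.ofFinite α
  refine ne_top_of_le_ne_top (ENat.natCast_ne_top (Fintype.card α)) (height_le fun p _ => ?_)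
  exact_mod_cast p.length_lt_card.le

lemma Order.strictMono_toNat_height {α : Type*} [Preorder α] [Finite α] :
    StrictMono fun a : α => (Order.height a).toNat := by
  intro a b hab
  have ha := height_ne_top_of_finite a
  have h := height_strictMono hab (lt_top_iff_ne_top.2 ha)
  rwa [← ENat.natCast_toNat ha, ← ENat.natCast_toNat (height_ne_top_of_finite b),
    Nat.cast_lt] at h

section Length

variable {M : Type*} [Mul M]

lemma Subsemigroup.coe_nonempty_iff_ne_bot (T : Subsemigroup M) :
    (T : Set M).Nonempty ↔ T ≠ ⊥ := by
  rw [Set.nonempty_iff_ne_empty, ← coe_bot, Ne, SetLike.coe_set_eq]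

lemma semigroupLength_eq_sSup_length (M : Type*) [Mul M] :
    semigroupLength M =
      sSup {n | ∃ p : LTSeries (Subsemigroup M), p.head ≠ ⊥ ∧ p.length = n} := by
  refine congrArg sSup (Set.ext fun n => ⟨?_, ?_⟩)
  · rintro ⟨c, hc, hne⟩
    exact ⟨LTSeries.mk n c hc, (Subsemigroup.coe_nonempty_iff_ne_bot _).1 (hne 0), rfl⟩
  · rintro ⟨p, hp, rfl⟩
    refine ⟨p, p.strictMono, fun i => ?_⟩
    exact ((Subsemigroup.coe_nonempty_iff_ne_bot _).2 hp).mono (p.head_le i)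

lemma bddAbove_length [Finite M] :
    BddAbove {n | ∃ p : LTSeries (Subsemigroup M), p.head ≠ ⊥ ∧ p.length = n} := by
  have := Fintype.ofFinite (Subsemigroup M)
  exact ⟨Fintype.card (Subsemigroup M), by rintro _ ⟨p, -, rfl⟩; exact p.length_lt_card.le⟩

lemma length_le_semigroupLength [Finite M] (p : LTSeries (Subsemigroup M)) (hp : p.head ≠ ⊥) :
    p.length ≤ semigroupLength M := by
  rw [semigroupLength_eq_sSup_length]
  exact le_csSup bddAbove_length ⟨p, hp, rfl⟩

lemma length_le_semigroupLength_add_one [Finite M] (p : LTSeries (Subsemigroup M)) :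
    p.length ≤ semigroupLength M + 1 := by
  rcases Nat.eq_zero_or_pos p.length with h | h
  · omega
  have htail : (p.tail h.ne').head ≠ ⊥ := by
    rw [RelSeries.head_tail]
    refine (bot_le.trans_lt (p.strictMono (Fin.pos_iff_ne_zero.2 ?_))).ne'
    rw [Ne, Fin.ext_iff, Fin.val_one', Fin.val_zero, Nat.one_mod_eq_zero_iff]
    omega
  have := length_le_semigroupLength _ htail
  simp only [RelSeries.tail_length] at this
  omega

lemma semigroupLength_le {n : ℕ}
    (h : ∀ p : LTSeries (Subsemigroup M), p.head ≠ ⊥ → p.length ≤ n) :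
    semigroupLength M ≤ n := by
  rw [semigroupLength_eq_sSup_length]
  exact csSup_le' fun _ ⟨p, hp, hn⟩ => hn ▸ h p hp

lemma exists_ltSeries_length_eq_semigroupLength [Finite M] [Nonempty M] :
    ∃ p : LTSeries (Subsemigroup M), p.head ≠ ⊥ ∧ p.length = semigroupLength M := by
  rw [semigroupLength_eq_sSup_length]
  have htop : (⊤ : Subsemigroup M) ≠ ⊥ :=
    (Subsemigroup.coe_nonempty_iff_ne_bot _).1 ⟨Classical.arbitrary M, trivial⟩
  refine Nat.sSup_mem ?_ bddAbove_length
  exact ⟨0, RelSeries.singleton _ ⊤, htop, rfl⟩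

lemma height_le_semigroupLength_add_one [Finite M] (T : Subsemigroup M) :
    Order.height T ≤ semigroupLength M + 1 :=
  Order.height_le fun p _ => by exact_mod_cast length_le_semigroupLength_add_one p

end Length

namespace Subsemigroup

variable {M : Type*} [MulZeroClass M]

def insertZero (T : Subsemigroup M) : Subsemigroup M where
  carrier := insert 0 T
  mul_mem' := by
    rintro a b (rfl | ha) hb
    · exact .inl (zero_mul b)
    · rcases hb with rfl | hb
      · exact .inl (mul_zero a)
      · exact .inr (T.mul_mem ha hb)

lemma zero_mem_insertZero (T : Subsemigroup M) : (0 : M) ∈ T.insertZero := .inl rfl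

lemma le_insertZero (T : Subsemigroup M) : T ≤ T.insertZero := fun _ => .inr

lemma insertZero_mono : Monotone (insertZero (M := M)) :=
  fun _ _ h _ => Or.imp_right (@h _)

lemma insertZero_eq_self {T : Subsemigroup M} (h : (0 : M) ∈ T) : T.insertZero = T :=
  le_antisymm (fun _ ha => ha.elim (· ▸ h) id) (le_insertZero T)

lemma le_of_insertZero_le {T U : Subsemigroup M} (h0 : (0 : M) ∉ T)
    (h : T.insertZero ≤ U.insertZero) : T ≤ U := fun _ ha =>
  (h (le_insertZero T ha)).resolve_left fun ha0 => h0 (ha0 ▸ ha)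

/-- Adjoining `0` merges at most one step of a chain (the step where `0` enters), and only if `0`
was missing at the start; that start is then recovered as the step `{0} < p.head.insertZero`. -/
lemma exists_ltSeries_insertZero (p : LTSeries (Subsemigroup M)) (hp : p.head ≠ ⊥) :
    ∃ q : LTSeries (Subsemigroup M), q.head = (⊥ : Subsemigroup M).insertZero ∧
      q.last = p.last.insertZero ∧ p.length ≤ q.length ∧
      ((0 : M) ∉ p.last → p.length + 1 ≤ q.length) := by
  induction p using RelSeries.inductionOn' with
  | singleton T =>
    by_cases hlt : (⊥ : Subsemigroup M).insertZero < T.insertZero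
    · exact ⟨(RelSeries.singleton _ _).snoc _ hlt, rfl, by simp, by simp, by simp⟩
    · have heq := (insertZero_mono bot_le).eq_of_not_lt hlt
      refine ⟨RelSeries.singleton _ _, rfl, heq, le_rfl, fun h0 => ?_⟩
      exact absurd (le_bot_iff.1 (le_of_insertZero_le h0 heq.ge)) hp
  | snoc p U hpU ih =>
    replace hpU : p.last < U := hpU
    obtain ⟨q, hq0, hqlast, hlen, hlen0⟩ := ih (by simpa using hp)
    simp only [RelSeries.last_snoc, RelSeries.snoc_length]
    by_cases hlt : p.last.insertZero < U.insertZero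
    · refine ⟨q.snoc _ (hqlast ▸ hlt), by simp [hq0], by simp, by simp [hlen], fun h0 => ?_⟩
      simpa using hlen0 fun h => h0 (hpU.le h)
    · have heq := (insertZero_mono hpU.le).eq_of_not_lt hlt
      have h0 : (0 : M) ∉ p.last := fun h0 =>
        hpU.not_ge ((le_insertZero U).trans (heq ▸ (insertZero_eq_self h0).le))
      refine ⟨q, hq0, hqlast.trans heq, hlen0 h0, fun hU => ?_⟩
      exact absurd (le_of_insertZero_le hU heq.ge) hpU.not_ge

lemma exists_ltSeries_insertZero_bot_top [Finite M] :
    ∃ q : LTSeries (Subsemigroup M), q.head = (⊥ : Subsemigroup M).insertZero ∧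
      q.last = ⊤ ∧ semigroupLength M ≤ q.length := by
  obtain ⟨p, hp, hlen⟩ := exists_ltSeries_length_eq_semigroupLength (M := M)
  obtain ⟨q, hq0, -, hqlen, -⟩ := exists_ltSeries_insertZero p hp
  by_cases htop : q.last = ⊤
  · exact ⟨q, hq0, htop, hlen ▸ hqlen⟩
  · refine ⟨q.snoc ⊤ (lt_top_iff_ne_top.2 htop), by simp [hq0], by simp, ?_⟩
    simp only [RelSeries.snoc_length]
    omega

end Subsemigroup

namespace PrincipalFactor

variable {S : Type*} [Semigroup S] {J : Set S}

noncomputable instance : MulZeroClass (PrincipalFactor J) where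
  zero := none
  zero_mul a := by cases a <;> rfl
  mul_zero a := by cases a <;> rfl

instance [Finite S] : Finite (PrincipalFactor J) := inferInstanceAs (Finite (Option J))

def of (x : J) : PrincipalFactor J := some x

lemma eq_zero_or_eq_of (a : PrincipalFactor J) : a = 0 ∨ ∃ x, a = of x := by
  rcases a with _ | x
  exacts [.inl rfl, .inr ⟨x, rfl⟩]

lemma of_injective : Function.Injective (of (J := J)) := Option.some_injective _

lemma of_ne_zero (x : J) : of x ≠ 0 := Option.some_ne_none x

lemma of_mul_of_of_mem {x y : J} (h : x.1 * y.1 ∈ J) : of x * of y = of ⟨x.1 * y.1, h⟩ :=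
  dif_pos h

lemma of_mul_of_of_notMem {x y : J} (h : x.1 * y.1 ∉ J) : of x * of y = 0 :=
  dif_neg h

variable (J) in
/-- The trace `{0} ∪ (T ∩ J)` of a subsemigroup `T` of `S` on `J*`. -/
def trace (T : Subsemigroup S) : Subsemigroup (PrincipalFactor J) where
  carrier := {a | ∀ x : J, a = of x → x.1 ∈ T}
  mul_mem' := by
    intro a b ha hb z hz
    rcases eq_zero_or_eq_of a with rfl | ⟨x, rfl⟩
    · exact absurd (hz.symm.trans (zero_mul b)) (of_ne_zero z)
    rcases eq_zero_or_eq_of b with rfl | ⟨y, rfl⟩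
    · exact absurd (hz.symm.trans (mul_zero _)) (of_ne_zero z)
    by_cases h : x.1 * y.1 ∈ J
    · rw [of_mul_of_of_mem h] at hz
      exact of_injective hz ▸ T.mul_mem (ha x rfl) (hb y rfl)
    · exact absurd (hz.symm.trans (of_mul_of_of_notMem h)) (of_ne_zero z)

lemma zero_mem_trace (T : Subsemigroup S) : (0 : PrincipalFactor J) ∈ trace J T :=
  fun x hx => absurd hx.symm (of_ne_zero x)

lemma bot_lt_trace (T : Subsemigroup S) : ⊥ < trace J T :=
  bot_lt_iff_ne_bot.2 ((Subsemigroup.coe_nonempty_iff_ne_bot _).1 ⟨0, zero_mem_trace T⟩)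

lemma of_mem_trace {T : Subsemigroup S} {x : J} : of x ∈ trace J T ↔ x.1 ∈ T :=
  ⟨fun h => h x rfl, fun h _ hy => of_injective hy ▸ h⟩

lemma trace_mono : Monotone (trace J) := by
  intro T U hTU a ha
  rcases eq_zero_or_eq_of a with rfl | ⟨x, rfl⟩
  exacts [zero_mem_trace U, of_mem_trace.2 (hTU (of_mem_trace.1 ha))]

lemma trace_lt_trace {T U : Subsemigroup S} (hTU : T ≤ U) {w : S} (hwJ : w ∈ J) (hwU : w ∈ U)
    (hwT : w ∉ T) : trace J T < trace J U :=
  SetLike.lt_iff_le_and_exists.2 ⟨trace_mono hTU, of ⟨w, hwJ⟩, of_mem_trace.2 hwU,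
    fun h => hwT (of_mem_trace.1 h)⟩

end PrincipalFactor

open PrincipalFactor in
lemma length_add_one_le_sum_semigroupLength {S : Type*} [Semigroup S] [Finite S]
    (Js : Finset (Set S)) (hcover : ∀ x : S, ∃ J ∈ Js, x ∈ J)
    (p : LTSeries (Subsemigroup S)) (hp : p.head ≠ ⊥) :
    p.length + 1 ≤ ∑ J ∈ Js, semigroupLength (PrincipalFactor J) := by
  set r : Subsemigroup S → ℕ := fun T => ∑ J ∈ Js, (Order.height (trace J T)).toNat
  have hr : StrictMono r := by
    intro T U hTU
    obtain ⟨w, hwU, hwT⟩ := SetLike.exists_of_lt hTU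
    obtain ⟨J, hJ, hwJ⟩ := hcover w
    exact Finset.sum_lt_sum
      (fun J _ => Order.strictMono_toNat_height.monotone (trace_mono hTU.le))
      ⟨J, hJ, Order.strictMono_toNat_height (trace_lt_trace hTU.le hwJ hwU hwT)⟩
  have hbot : Js.card ≤ r ⊥ := by
    rw [Finset.card_eq_sum_ones]
    exact Finset.sum_le_sum fun J _ =>
      Nat.one_le_of_lt (Order.strictMono_toNat_height (bot_lt_trace (J := J) ⊥))
  have htop : r ⊤ ≤ ∑ J ∈ Js, semigroupLength (PrincipalFactor J) + Js.card := by
    rw [Finset.card_eq_sum_ones, ← Finset.sum_add_distrib]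
    exact Finset.sum_le_sum fun J _ =>
      ENat.toNat_le_of_le_natCast (height_le_semigroupLength_add_one _)
  have hchain := (p.map r hr).head_add_length_le_nat
  simp only [LTSeries.head_map, LTSeries.last_map, LTSeries.map_length] at hchain
  have := hr (bot_lt_iff_ne_bot.2 hp)
  have := hr.monotone (le_top : p.last ≤ ⊤)
  omega

namespace PrincipalFactor

variable {S : Type*} [Semigroup S] {I J : Set S}

variable (I J) in
/-- The subsemigroup `I ∪ (V ∩ J)` of `S`, for an ideal `I` absorbing the products that
leave `J`. -/
def liftSubsemigroup (hI : ∀ a b : S, a ∈ I ∨ b ∈ I → a * b ∈ I)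
    (hJ : ∀ a ∈ J, ∀ b ∈ J, a * b ∉ J → a * b ∈ I)
    (V : Subsemigroup (PrincipalFactor J)) : Subsemigroup S where
  carrier := I ∪ {s | ∃ h : s ∈ J, of ⟨s, h⟩ ∈ V}
  mul_mem' := by
    rintro a b (ha | ⟨haJ, haV⟩) hb
    · exact .inl (hI a b (.inl ha))
    rcases hb with hb | ⟨hbJ, hbV⟩
    · exact .inl (hI a b (.inr hb))
    by_cases hab : a * b ∈ J
    · exact .inr ⟨hab, of_mul_of_of_mem (x := ⟨a, haJ⟩) (y := ⟨b, hbJ⟩) hab ▸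
        V.mul_mem haV hbV⟩
    · exact .inl (hJ a haJ b hbJ hab)

variable {hI : ∀ a b : S, a ∈ I ∨ b ∈ I → a * b ∈ I}
  {hJ : ∀ a ∈ J, ∀ b ∈ J, a * b ∉ J → a * b ∈ I}

lemma coe_liftSubsemigroup_insertZero_bot :
    (liftSubsemigroup I J hI hJ (⊥ : Subsemigroup _).insertZero : Set S) = I :=
  Set.union_eq_left.2 fun _ ⟨_, h⟩ => h.elim (absurd · (of_ne_zero _)) fun h => h.elim

lemma coe_liftSubsemigroup_top : (liftSubsemigroup I J hI hJ ⊤ : Set S) = I ∪ J :=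
  congrArg (I ∪ ·) (Set.ext fun _ => ⟨fun ⟨h, _⟩ => h, fun h => ⟨h, trivial⟩⟩)

lemma liftSubsemigroup_lt_liftSubsemigroup (hIJ : Disjoint I J)
    {V W : Subsemigroup (PrincipalFactor J)} (hV : (0 : PrincipalFactor J) ∈ V) (hVW : V < W) :
    liftSubsemigroup I J hI hJ V < liftSubsemigroup I J hI hJ W := by
  refine SetLike.lt_iff_le_and_exists.2 ⟨?_, ?_⟩
  · rintro s (hs | ⟨h, hsV⟩)
    exacts [.inl hs, .inr ⟨h, hVW.le hsV⟩]
  obtain ⟨a, haW, haV⟩ := SetLike.exists_of_lt hVW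
  obtain ⟨x, rfl⟩ := (eq_zero_or_eq_of a).resolve_left fun h => haV (h ▸ hV)
  refine ⟨x, .inr ⟨x.2, haW⟩, ?_⟩
  rintro (hxI | ⟨_, hxV⟩)
  exacts [hIJ.notMem_of_mem_right x.2 hxI, haV hxV]

end PrincipalFactor

open PrincipalFactor Subsemigroup in
lemma exists_ltSeries_extend_of_principalFactor {S : Type*} [Semigroup S] [Finite S]
    {I J : Set S} (hI : ∀ a b : S, a ∈ I ∨ b ∈ I → a * b ∈ I)
    (hJ : ∀ a ∈ J, ∀ b ∈ J, a * b ∉ J → a * b ∈ I)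
    (hIJ : Disjoint I J) (p : LTSeries (Subsemigroup S)) (hp : (p.last : Set S) = I) :
    ∃ p' : LTSeries (Subsemigroup S), p'.head = p.head ∧ (p'.last : Set S) = I ∪ J ∧
      p.length + semigroupLength (PrincipalFactor J) ≤ p'.length := by
  obtain ⟨q, hq₀, hqlast, hqlen⟩ :=
    exists_ltSeries_insertZero_bot_top (M := PrincipalFactor J)
  have hzero (i) : (0 : PrincipalFactor J) ∈ q i :=
    q.head_le i (hq₀ ▸ zero_mem_insertZero ⊥)
  let q' := LTSeries.mk q.length (fun i => liftSubsemigroup I J hI hJ (q i))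
    fun i _ hij => liftSubsemigroup_lt_liftSubsemigroup hIJ (hzero i) (q.strictMono hij)
  have hjoin : p.last = q'.head := by
    refine SetLike.coe_injective (hp.trans ?_)
    change I = liftSubsemigroup I J hI hJ q.head
    rw [hq₀, coe_liftSubsemigroup_insertZero_bot]
  refine ⟨p.smash q' hjoin, RelSeries.head_smash hjoin, ?_, ?_⟩
  · rw [RelSeries.last_smash]
    change (liftSubsemigroup I J hI hJ q.last : Set S) = I ∪ J
    rw [hqlast, coe_liftSubsemigroup_top]
  · simp only [RelSeries.smash_length]
    exact Nat.add_le_add_left hqlen _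

section JLowerSet

variable {S : Type*} [Semigroup S]

/-- A set of `J`-classes closed downwards in the order `J_y ≤ J_x ↔ y ∈ S¹xS¹`. -/
def IsJLowerSet (K : Finset (Set S)) : Prop :=
  ∀ x y : S, jClass x ∈ K → y ∈ principalIdeal x → jClass y ∈ K

lemma IsJLowerSet.mul_mem {K : Finset (Set S)} (hK : IsJLowerSet K) (a b : S)
    (h : jClass a ∈ K ∨ jClass b ∈ K) : jClass (a * b) ∈ K :=
  h.elim (hK a _ · (mul_mem_principalIdeal_right b (mem_principalIdeal_self a)))
    (hK b _ · (mul_mem_principalIdeal_left a (mem_principalIdeal_self b)))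

lemma exists_maximal_jClass [Finite S] {K : Finset (Set S)} {x : S} (hx : jClass x ∈ K) :
    ∃ x₀, jClass x₀ ∈ K ∧
      ∀ y, jClass y ∈ K → x₀ ∈ principalIdeal y → jClass y = jClass x₀ := by
  obtain ⟨x₀, hx₀, hmax⟩ := Set.exists_max_image {x | jClass x ∈ K}
    (fun x => (principalIdeal x).ncard) (Set.toFinite _) ⟨x, hx⟩
  refine ⟨x₀, hx₀, fun y hy hx₀y => ?_⟩
  have hsub := principalIdeal_subset_of_mem hx₀y
  exact jClass_eq_of_mem (Set.eq_of_subset_of_ncard_le hsub (hmax y hy) (Set.toFinite _)).symm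

lemma IsJLowerSet.erase [DecidableEq (Set S)] {K : Finset (Set S)} (hK : IsJLowerSet K) {x₀ : S}
    (hmax : ∀ y, jClass y ∈ K → x₀ ∈ principalIdeal y → jClass y = jClass x₀) :
    IsJLowerSet (K.erase (jClass x₀)) := by
  intro x y hx hyx
  refine Finset.mem_erase.2 ⟨fun hy => ?_, hK x y (Finset.mem_of_mem_erase hx) hyx⟩
  have hx₀ : x₀ ∈ principalIdeal y := by
    rw [show principalIdeal y = principalIdeal x₀ from mem_jClass_of_jClass_eq hy]
    exact mem_principalIdeal_self x₀
  exact (Finset.mem_erase.1 hx).1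
    (hmax x (Finset.mem_of_mem_erase hx) (principalIdeal_subset_of_mem hyx hx₀))

end JLowerSet

lemma exists_ltSeries_of_isJLowerSet {S : Type*} [Semigroup S] [Finite S] (K : Finset (Set S))
    (hK : IsJLowerSet K) (hKJ : ∀ J ∈ K, ∃ x, J = jClass x) :
    ∃ p : LTSeries (Subsemigroup S), p.head = ⊥ ∧ (p.last : Set S) = {s | jClass s ∈ K} ∧
      ∑ J ∈ K, semigroupLength (PrincipalFactor J) ≤ p.length := by
  classical
  induction K using Finset.strongInduction with
  | H K ih =>
  rcases K.eq_empty_or_nonempty with rfl | ⟨J, hJK⟩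
  · exact ⟨RelSeries.singleton _ ⊥, rfl, by simp, by simp⟩
  obtain ⟨x, rfl⟩ := hKJ J hJK
  obtain ⟨x₀, hx₀K, hmax⟩ := exists_maximal_jClass hJK
  set K' := K.erase (jClass x₀)
  obtain ⟨p, hp₀, hplast, hplen⟩ := ih K' (Finset.erase_ssubset hx₀K) (hK.erase hmax)
    fun J hJ => hKJ J (Finset.mem_of_mem_erase hJ)
  have hJ (a) (ha : a ∈ jClass x₀) (b) (_ : b ∈ jClass x₀) (hab : a * b ∉ jClass x₀) :
      jClass (a * b) ∈ K' := by
    refine Finset.mem_erase.2 ⟨fun h => hab (mem_jClass_of_jClass_eq h), ?_⟩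
    exact hK.mul_mem a b (.inl (jClass_eq_of_mem ha ▸ hx₀K))
  have hIJ : Disjoint {s | jClass s ∈ K'} (jClass x₀) := by
    refine Set.disjoint_left.2 fun s (hs : jClass s ∈ K') hsJ => ?_
    rw [jClass_eq_of_mem hsJ] at hs
    exact Finset.notMem_erase _ K hs
  obtain ⟨p', hp'₀, hp'last, hp'len⟩ :=
    exists_ltSeries_extend_of_principalFactor (hK.erase hmax).mul_mem hJ hIJ p hplast
  refine ⟨p', hp'₀.trans hp₀, hp'last.trans (Set.ext fun s => ?_), ?_⟩
  · refine ⟨fun h => h.elim Finset.mem_of_mem_erase fun h => ?_, fun h => ?_⟩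
    · show jClass s ∈ K
      rw [jClass_eq_of_mem h]
      exact hx₀K
    by_cases hs : jClass s = jClass x₀
    exacts [.inr (mem_jClass_of_jClass_eq hs), .inl (Finset.mem_erase.2 ⟨hs, h⟩)]
  · have hsum : ∑ J ∈ K, semigroupLength (PrincipalFactor J) =
        semigroupLength (PrincipalFactor (jClass x₀)) +
          ∑ J ∈ K', semigroupLength (PrincipalFactor J) :=
      (Finset.add_sum_erase K _ hx₀K).symm
    omega

theorem semigroupLength_regular_general (S : Type*) [Semigroup S] [Fintype S]
    (Js : Finset (Set S)) (hJs : ∀ J : Set S, J ∈ Js ↔ ∃ x : S, J = jClass x) :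
    semigroupLength S = (∑ J ∈ Js, semigroupLength (PrincipalFactor J)) - 1 := by
  have hcover (x : S) : ∃ J ∈ Js, x ∈ J :=
    ⟨jClass x, (hJs _).2 ⟨x, rfl⟩, mem_jClass_self x⟩
  have hupper : semigroupLength S ≤ (∑ J ∈ Js, semigroupLength (PrincipalFactor J)) - 1 :=
    semigroupLength_le fun p hp => by
      have := length_add_one_le_sum_semigroupLength Js hcover p hp
      omega
  obtain ⟨p, -, -, hp⟩ := exists_ltSeries_of_isJLowerSet Js
    (fun _ y _ _ => (hJs _).2 ⟨y, rfl⟩) fun J hJ => (hJs J).1 hJ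
  have hlower := hp.trans (length_le_semigroupLength_add_one p)
  omega

/-- Let `S` be a finite regular semigroup with `J`-classes `J₁, …, J_m`.  Then
`l(S) = l(J₁*) + ⋯ + l(J_m*) − 1`, where `J*` is the principal factor of `J`. -/
theorem semigroupLength_regular (S : Type*) [Semigroup S] [Fintype S]
    (hreg : ∀ x : S, ∃ y : S, x * y * x = x)
    (Js : Finset (Set S)) (hJs : ∀ J : Set S, J ∈ Js ↔ ∃ x : S, J = jClass x) :
    semigroupLength S = (∑ J ∈ Js, semigroupLength (PrincipalFactor J)) - 1 :=
  semigroupLength_regular_general S Js hJs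
end

section
/- For every integer n ≥ 2, the length of the semigroup O_n of order-preserving transformations of the chain {1,...,n} satisfies l(O_n) ≥ C(2n−3, n) − 1, where C denotes the binomial coefficient. -/
/-- `O_n`: the semigroup of all order-preserving transformations of the chain
`{1,…,n}`, as a subsemigroup of the full transformation semigroup. -/
def orderPreservingSemigroup (n : ℕ) : Subsemigroup (Function.End (Fin n)) where
  carrier := {f | Monotone f}
  mul_mem' := fun {a b} ha hb => Monotone.comp ha hb

/-!
Let `r` be a rank function on a finite semigroup with `r (x * y) ≤ min (r x) (r y)`, and let `A`
be a set with `r (a * b) < r a` for all `a, b ∈ A`. Listing `A` as `a₀, …, aₘ` with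
non-decreasing rank, the sets `{x | r x < r aᵢ} ∪ {a₀, …, aᵢ}` form a strictly increasing chain
of subsemigroups, so the length is at least `|A| - 1`.

In `O_n` take `r f = |im f|` and for `A` the maps that miss `0` and take the value `f 0` only
at `0`: then `a * b` misses `a 0`, so its image is strictly smaller than that of `a`. A stars
and bars construction produces `C(2n-3, n)` such maps.
-/

open Function Finset

section RankChain

variable {M β : Type*} [Mul M] [LinearOrder β]

theorem le_semigroupLength [Finite M] {k : ℕ} (c : Fin (k + 1) → Subsemigroup M)
    (hc : StrictMono c) (hne : ∀ i, (c i : Set M).Nonempty) : k ≤ semigroupLength M := by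
  have : Finite (Subsemigroup M) := Finite.of_injective _ SetLike.coe_injective
  refine le_csSup ⟨Nat.card (Subsemigroup M), ?_⟩ ⟨c, hc, hne⟩
  rintro l ⟨d, hd, -⟩
  have := Nat.card_le_card_of_injective d hd.injective
  rw [Nat.card_fin] at this
  omega

theorem exists_strictMono_subsemigroups_of_rank (r : M → β)
    (hl : ∀ x y, r (x * y) ≤ r x) (hr : ∀ x y, r (x * y) ≤ r y)
    {m : ℕ} (a : Fin m → M) (ha : Injective a) (har : Monotone (r ∘ a))
    (hdrop : ∀ i j, r (a i * a j) < r (a i)) :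
    ∃ c : Fin m → Subsemigroup M, StrictMono c ∧ ∀ i, a i ∈ c i := by
  let c : Fin m → Subsemigroup M := fun i =>
    { carrier := {x | r x < r (a i)} ∪ a '' Set.Iic i
      mul_mem' := by
        rintro x y (hx | ⟨j, hj, rfl⟩) (hy | ⟨k, -, rfl⟩)
        · exact Or.inl ((hl x y).trans_lt hx)
        · exact Or.inl ((hl _ _).trans_lt hx)
        · exact Or.inl ((hr _ _).trans_lt hy)
        · exact Or.inl ((hdrop j k).trans_le (har hj)) }
  refine ⟨c, fun i j hij => SetLike.lt_iff_le_and_exists.2 ⟨?_, a j, ?_, ?_⟩,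
    fun i => Or.inr ⟨i, Set.mem_Iic.2 le_rfl, rfl⟩⟩
  · rintro x (hx | ⟨k, hk, rfl⟩)
    · exact Or.inl (hx.trans_le (har hij.le))
    · exact Or.inr ⟨k, hk.trans hij.le, rfl⟩
  · exact Or.inr ⟨j, Set.mem_Iic.2 le_rfl, rfl⟩
  · rintro (h | ⟨k, hk, hkj⟩)
    · exact (har hij.le).not_gt h
    · exact (ha hkj ▸ hk).not_gt hij

theorem card_sub_one_le_semigroupLength [Finite M] (r : M → β)
    (hl : ∀ x y, r (x * y) ≤ r x) (hr : ∀ x y, r (x * y) ≤ r y)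
    (A : Finset M) (hA : ∀ x ∈ A, ∀ y ∈ A, r (x * y) < r x) :
    #A - 1 ≤ semigroupLength M := by
  cases hk : #A with
  | zero => exact Nat.zero_le _
  | succ k =>
    rw [Nat.add_sub_cancel]
    let b : Fin (k + 1) → M := fun i => ((equivFinOfCardEq hk).symm i : M)
    have hb : Injective b := Subtype.val_injective.comp (equivFinOfCardEq hk).symm.injective
    let a := b ∘ Tuple.sort (r ∘ b)
    obtain ⟨c, hc, hac⟩ := exists_strictMono_subsemigroups_of_rank r hl hr a
      (hb.comp (Tuple.sort _).injective) (Tuple.monotone_sort (r ∘ b))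
      (fun i j => hA _ (coe_mem _) _ (coe_mem _))
    exact le_semigroupLength c hc fun i => ⟨a i, hac i⟩

end RankChain

section RangeRank

variable {α : Type*} [Finite α]

theorem ncard_range_comp_le_right (f g : α → α) :
    (Set.range (f ∘ g)).ncard ≤ (Set.range g).ncard := by
  rw [Set.range_comp]
  exact Set.ncard_image_le

theorem ncard_range_comp_le_left (f g : α → α) :
    (Set.range (f ∘ g)).ncard ≤ (Set.range f).ncard :=
  Set.ncard_le_ncard (Set.range_comp_subset_range g f)

/-- `f ∘ g` misses `f p`, which lies in the range of `f`. -/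
theorem ncard_range_comp_lt {f g : α → α} {p : α} (hg : p ∉ Set.range g)
    (hf : ∀ x, f x = f p → x = p) :
    (Set.range (f ∘ g)).ncard < (Set.range f).ncard := by
  have hsub : Set.range (f ∘ g) ⊆ Set.range f \ {f p} := by
    rintro _ ⟨x, rfl⟩
    exact ⟨⟨g x, rfl⟩, fun h => hg ⟨x, hf _ h⟩⟩
  exact (Set.ncard_le_ncard hsub).trans_lt (Set.ncard_sdiff_singleton_lt_of_mem ⟨p, rfl⟩)

end RangeRank

theorem Fin.add_sub_le_of_strictMono {k : ℕ} {f : Fin k → ℕ} (hf : StrictMono f)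
    {i j : Fin k} (hij : i ≤ j) : f i + (j - i : ℕ) ≤ f j := by
  obtain ⟨j, hj⟩ := j
  rw [Fin.le_def] at hij
  induction j with
  | zero =>
    obtain rfl : i = ⟨0, hj⟩ := Fin.ext (by simp only at hij ⊢; omega)
    simp
  | succ j ih =>
    rcases hij.eq_or_lt with hji | hlt
    · obtain rfl : i = ⟨j + 1, hj⟩ := Fin.ext hji
      simp
    have hprev := ih (by omega) (by simp only at hlt ⊢; omega)
    have hstep : f ⟨j, by omega⟩ < f ⟨j + 1, hj⟩ := hf (Fin.mk_lt_mk.2 j.lt_succ_self)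
    simp only at hprev hlt ⊢
    omega

section OrderEmbedding

variable {k N : ℕ} (e : Fin k ↪o Fin N)

theorem OrderEmbedding.val_add_sub_le {i j : Fin k} (hij : i ≤ j) :
    (e i : ℕ) + (j - i : ℕ) ≤ e j :=
  Fin.add_sub_le_of_strictMono (Fin.val_strictMono.comp e.strictMono) hij

theorem OrderEmbedding.val_apply_add_le (i : Fin k) : (e i : ℕ) + (k - i) ≤ N := by
  have := i.isLt
  have := e.val_add_sub_le (i := i) (j := ⟨k - 1, by omega⟩) (Fin.le_def.2 (Nat.le_sub_one_of_lt i.isLt))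
  have := (e ⟨k - 1, by omega⟩).isLt
  simp only at *
  omega

theorem OrderEmbedding.le_val_apply [NeZero k] (i : Fin k) : (i : ℕ) ≤ e i := by
  have := e.val_add_sub_le (Fin.zero_le i)
  simp only [Fin.val_zero, Nat.sub_zero] at this
  omega

end OrderEmbedding

section SpecialMap

variable {n : ℕ} [NeZero n] (e : Fin n ↪o Fin (2 * n - 3))

/-- Stars and bars: `i ↦ e i - i` is a monotone map `Fin n → Fin (n - 2)`; shifting it by `2`
off `0` and by `1` at `0` gives a map that misses `0` and takes its value at `0` only at `0`. -/
def specialValue (i : Fin n) : ℕ := if i = 0 then e i + 1 else e i + 2 - i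

theorem specialValue_zero : specialValue e 0 = e 0 + 1 := if_pos rfl

theorem specialValue_lt (i : Fin n) : specialValue e i < n := by
  have := e.val_apply_add_le i
  rcases eq_or_ne i 0 with rfl | hi
  · rw [specialValue_zero]
    rw [Fin.val_zero, Nat.sub_zero] at this
    omega
  · simp only [specialValue, hi, if_false]
    omega

theorem specialValue_zero_lt {i : Fin n} (hi : i ≠ 0) : specialValue e 0 < specialValue e i := by
  have := e.val_add_sub_le (Fin.zero_le i)
  rw [Fin.val_zero, Nat.sub_zero] at this
  rw [specialValue_zero, specialValue, if_neg hi]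
  omega

theorem specialValue_monotone : Monotone (specialValue e) := by
  intro i j hij
  rcases eq_or_ne j 0 with rfl | hj
  · rw [le_antisymm hij (Fin.zero_le i)]
  rcases eq_or_ne i 0 with rfl | hi
  · exact (specialValue_zero_lt e hj).le
  have := e.val_add_sub_le hij
  have := e.le_val_apply i
  simp only [specialValue, hi, hj, if_false]
  omega

def specialMap : orderPreservingSemigroup n :=
  ⟨fun i => ⟨specialValue e i, specialValue_lt e i⟩,
    fun _ _ hij => Fin.le_def.2 (specialValue_monotone e hij)⟩

theorem zero_notMem_range_specialMap :
    (0 : Fin n) ∉ Set.range ((specialMap e).val : Fin n → Fin n) := by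
  rintro ⟨x, hx⟩
  have hx : specialValue e x = 0 := congrArg Fin.val hx
  rcases eq_or_ne x 0 with rfl | hx0
  · simp [specialValue_zero] at hx
  · exact (Nat.zero_le _).not_gt (hx ▸ specialValue_zero_lt e hx0)

theorem eq_zero_of_specialMap_eq {x : Fin n}
    (h : ((specialMap e).val : Fin n → Fin n) x = ((specialMap e).val : Fin n → Fin n) 0) :
    x = 0 := by
  by_contra hx
  exact (specialValue_zero_lt e hx).ne' (congrArg Fin.val h)

variable (n) in
theorem specialMap_injective :
    Injective (specialMap : (Fin n ↪o Fin (2 * n - 3)) → orderPreservingSemigroup n) := by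
  intro e e' h
  refine DFunLike.ext _ _ fun i => Fin.ext ?_
  have hi : specialValue e i = specialValue e' i :=
    congrArg Fin.val (congrFun (congrArg Subtype.val h) i)
  have := e.le_val_apply i
  have := e'.le_val_apply i
  unfold specialValue at hi
  split_ifs at hi <;> omega

end SpecialMap

theorem Finset.orderEmbOfFin_injective {α : Type*} [LinearOrder α] (k : ℕ) :
    Injective fun s : {s : Finset α // #s = k} => s.1.orderEmbOfFin s.2 := by
  rintro ⟨s, hs⟩ ⟨t, ht⟩ h
  refine Subtype.ext (Finset.coe_injective ?_)
  rw [← Finset.range_orderEmbOfFin s hs, ← Finset.range_orderEmbOfFin t ht]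
  exact congrArg (fun f : Fin k ↪o α => Set.range f) h

theorem semigroupLength_orderPreserving_general (n : ℕ) :
    (2 * n - 3).choose n - 1 ≤ semigroupLength (orderPreservingSemigroup n) := by
  classical
  rcases lt_or_ge n 3 with hn | hn
  · interval_cases n <;> simp
  have : NeZero n := ⟨by omega⟩
  have : Finite (Function.End (Fin n)) := inferInstanceAs (Finite (Fin n → Fin n))
  let A := univ.image fun s : {s : Finset (Fin (2 * n - 3)) // #s = n} =>
    specialMap (s.1.orderEmbOfFin s.2)
  have hA : #A = (2 * n - 3).choose n :=
    (card_image_of_injective _ ((specialMap_injective n).comp (orderEmbOfFin_injective n))).trans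
      (by rw [card_univ, Fintype.card_finset_len, Fintype.card_fin])
  rw [← hA]
  refine card_sub_one_le_semigroupLength
    (fun f : orderPreservingSemigroup n => (Set.range (f.val : Fin n → Fin n)).ncard)
    (fun f g => ncard_range_comp_le_left (f.val : Fin n → Fin n) g.val)
    (fun f g => ncard_range_comp_le_right (f.val : Fin n → Fin n) g.val) A ?_
  simp only [A, mem_image, mem_univ, true_and]
  rintro _ ⟨s, rfl⟩ _ ⟨t, rfl⟩
  exact ncard_range_comp_lt (zero_notMem_range_specialMap _) fun _ h => eq_zero_of_specialMap_eq _ h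

/-- For every integer `n ≥ 2`, the length of the semigroup `O_n` of order-preserving
transformations of `{1,…,n}` satisfies `l(O_n) ≥ C(2n−3, n) − 1`. -/
theorem semigroupLength_orderPreserving (n : ℕ) (hn : 2 ≤ n) :
    (2 * n - 3).choose n - 1 ≤ semigroupLength (orderPreservingSemigroup n) :=
  semigroupLength_orderPreserving_general n
end
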